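/- The ordinary multinomials satisfy the convolution identity ⟨N,k⟩_s = Σ_{m=0}^{N} C(N,m) · ⟨m, k−m⟩_{s−1} for s ≥ 1. -/

import Mathlib

/-- The ordinary multinomial `⟨N,k⟩ₛ`: the coefficient of `T^k` in `(1+T+⋯+T^s)^N`,
with value `0` for `k < 0`. -/
noncomputable def ordMultinomial (N s : ℕ) (k : ℤ) : ℕ :=
  if 0 ≤ k then
    (((∑ i ∈ Finset.range (s + 1), (Polynomial.X : Polynomial ℕ) ^ i)) ^ N).coeff k.toNat
  else 0

/-!
Write `1 + T + ⋯ + T^s = 1 + T (1 + T + ⋯ + T^(s-1))` and expand the `N`-th power by the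
binomial theorem: the `m`-th term `C(N,m) T^m (1 + ⋯ + T^(s-1))^m` contributes
`C(N,m) ⟨m, k-m⟩_{s-1}` to the coefficient of `T^k`.
-/

open Finset Polynomial

lemma geom_sum_succ_pow {R : Type*} [CommSemiring R] (x : R) (n N : ℕ) :
    (∑ i ∈ range (n + 1), x ^ i) ^ N =
      ∑ m ∈ range (N + 1), (N.choose m : R) * (x ^ m * (∑ i ∈ range n, x ^ i) ^ m) := by
  rw [geom_sum_succ, add_pow]
  refine sum_congr rfl fun m _ => ?_
  rw [one_pow, mul_one, mul_pow, mul_comm]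

lemma ordMultinomial_of_neg (N s : ℕ) {k : ℤ} (hk : k < 0) : ordMultinomial N s k = 0 :=
  if_neg (not_le.mpr hk)

lemma ordMultinomial_natCast (N s n : ℕ) :
    ordMultinomial N s n = ((∑ i ∈ range (s + 1), (X : ℕ[X]) ^ i) ^ N).coeff n := by
  rw [ordMultinomial, if_pos (Int.natCast_nonneg n), Int.toNat_natCast]

lemma ordMultinomial_natCast_sub (N s n j : ℕ) :
    ordMultinomial N s (n - j) =
      ((X : ℕ[X]) ^ j * (∑ i ∈ range (s + 1), (X : ℕ[X]) ^ i) ^ N).coeff n := by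
  rw [coeff_X_pow_mul']
  split_ifs with hjn
  · rw [← Nat.cast_sub hjn, ordMultinomial_natCast]
  · exact ordMultinomial_of_neg N s (by omega)

theorem stmt_15 (N s : ℕ) (hs : 1 ≤ s) (k : ℤ) :
    ordMultinomial N s k =
      ∑ m ∈ Finset.range (N + 1), N.choose m * ordMultinomial m (s - 1) (k - m) := by
  obtain ⟨s, rfl⟩ := Nat.exists_eq_add_of_le' hs
  rw [Nat.add_sub_cancel]
  rcases lt_or_ge k 0 with hk | hk
  · rw [ordMultinomial_of_neg N _ hk]
    refine (sum_eq_zero fun m _ => ?_).symm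
    rw [ordMultinomial_of_neg m s (by omega), mul_zero]
  · lift k to ℕ using hk
    rw [ordMultinomial_natCast, geom_sum_succ_pow, finsetSum_coeff]
    refine sum_congr rfl fun m _ => ?_
    rw [coeff_natCast_mul, ordMultinomial_natCast_sub, Nat.cast_id]
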